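/- Let p and q be distinct primes. In the power graph of the dihedral group D_{2pq}, the identity has degree 2pq - 1, each rotation of order pq has degree pq - 1, each rotation of order q has degree pq - p, each rotation of order p has degree pq - q, and each reflection has degree 1. -/

import Mathlib

open Polynomial

/-- The power graph of a group: distinct `x, y` are adjacent iff one is an
integral power of the other. -/
def powerGraph (G : Type*) [Group G] : SimpleGraph G where
  Adj x y := x ≠ y ∧ (x ∈ Subgroup.zpowers y ∨ y ∈ Subgroup.zpowers x)
  symm := ⟨fun _ _ h => ⟨h.1.symm, h.2.symm⟩⟩
  loopless := ⟨fun _ h => h.1 rfl⟩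

/-!
The rotations form a copy of the cyclic group `C_{pq}`, a reflection `s` generates only `{1, s}`,
and no reflection is a power of a rotation. Hence the identity is adjacent to everything, a
reflection only to the identity, and a nontrivial rotation has the same neighbours as in the power
graph of `C_{pq}`. In a cyclic group `y ∈ ⟨x⟩` iff `ord y ∣ ord x`, so a generator is adjacent to
everything, while an element of prime order `q` is adjacent to everything except itself and the
`φ(p) = p - 1` elements of order `p`.
-/

open Subgroup Multiplicative

theorem Set.ncard_compl_singleton {α : Type*} [Finite α] (a : α) :
    ({a}ᶜ : Set α).ncard = Nat.card α - 1 := by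
  rw [Set.ncard_compl, Set.ncard_singleton]

theorem Nat.dvd_or_dvd_iff_ne_of_dvd_mul_of_prime {p q d : ℕ} (hp : p.Prime) (hq : q.Prime)
    (hpq : p ≠ q) (hd : d ∣ p * q) : d ∣ q ∨ q ∣ d ↔ d ≠ p := by
  obtain ⟨a, b, ha, hb, rfl⟩ := Nat.dvd_mul.mp hd
  rcases (Nat.dvd_prime hp).mp ha with rfl | rfl <;> rcases (Nat.dvd_prime hq).mp hb with rfl | rfl
  · simp [hp.ne_one.symm]
  · simp [hpq.symm]
  · simp [Nat.prime_dvd_prime_iff_eq hp hq, Nat.prime_dvd_prime_iff_eq hq hp, hpq, hpq.symm]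
  · simp [Nat.mul_eq_left hp.ne_zero, hq.ne_one]

section PowerGraph

variable {G : Type*} [Group G]

theorem powerGraph_neighborSet_eq_compl_singleton {x : G}
    (h : ∀ y, x ∈ zpowers y ∨ y ∈ zpowers x) : (powerGraph G).neighborSet x = {x}ᶜ := by
  ext y
  exact ⟨fun hy => Ne.symm hy.1, fun hy => ⟨Ne.symm hy, h y⟩⟩

theorem powerGraph_neighborSet_one : (powerGraph G).neighborSet 1 = {1}ᶜ :=
  powerGraph_neighborSet_eq_compl_singleton fun _ => Or.inl (one_mem _)

theorem powerGraph_neighborSet_of_zpowers_eq_top {x : G} (hx : zpowers x = ⊤) :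
    (powerGraph G).neighborSet x = {x}ᶜ :=
  powerGraph_neighborSet_eq_compl_singleton fun y => Or.inr (hx ▸ mem_top y)

theorem powerGraph_adj_map_iff {H : Type*} [Group H] {f : H →* G} (hf : Function.Injective f)
    {x y : H} : (powerGraph G).Adj (f x) (f y) ↔ (powerGraph H).Adj x y := by
  simp only [powerGraph, ← MonoidHom.map_zpowers, mem_map_iff_mem hf, hf.ne_iff]

theorem IsCyclic.mem_zpowers_iff_orderOf_dvd [Finite G] [IsCyclic G] {x y : G} :
    y ∈ zpowers x ↔ orderOf y ∣ orderOf x := by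
  classical
  have := Fintype.ofFinite G
  refine ⟨orderOf_dvd_of_mem_zpowers, fun h => ?_⟩
  -- `⟨x⟩` already has `orderOf x` elements, the most a cyclic group allows among the roots of
  -- `a ^ orderOf x = 1`
  have hroots : (zpowers x : Set G) = {a | a ^ orderOf x = 1} := by
    refine Set.eq_of_subset_of_ncard_le ?_ ?_
    · exact fun z hz => orderOf_dvd_iff_pow_eq_one.mp (orderOf_dvd_of_mem_zpowers hz)
    · rw [Set.ncard_eq_toFinset_card', Set.toFinset_ofPred, ← Nat.card_coe_set_eq,
        SetLike.coe_sort_coe, Nat.card_zpowers]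
      exact IsCyclic.card_pow_eq_one_le (orderOf_pos x)
  rw [← SetLike.mem_coe, hroots]
  exact orderOf_dvd_iff_pow_eq_one.mp h

theorem powerGraph_adj_iff_of_isCyclic [Finite G] [IsCyclic G] {x y : G} :
    (powerGraph G).Adj x y ↔ x ≠ y ∧ (orderOf x ∣ orderOf y ∨ orderOf y ∣ orderOf x) := by
  simp only [powerGraph, IsCyclic.mem_zpowers_iff_orderOf_dvd]

theorem ncard_powerGraph_neighborSet_of_orderOf_eq_prime [Finite G] [IsCyclic G] {p q : ℕ}
    (hp : p.Prime) (hq : q.Prime) (hpq : p ≠ q) (hG : Nat.card G = p * q) {x : G}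
    (hx : orderOf x = q) : ((powerGraph G).neighborSet x).ncard = p * q - p := by
  have hset : (powerGraph G).neighborSet x = {y | orderOf y = p}ᶜ \ {x} := by
    ext y
    have hy := Nat.dvd_or_dvd_iff_ne_of_dvd_mul_of_prime hp hq hpq (hG ▸ orderOf_dvd_natCard y)
    simp only [SimpleGraph.mem_neighborSet, powerGraph_adj_iff_of_isCyclic, hx, Set.mem_sdiff,
      Set.mem_compl_iff, Set.mem_ofPred_eq, Set.mem_singleton_iff]
    rw [or_comm, hy, ne_comm, and_comm]
  have horder_p : {y : G | orderOf y = p}.ncard = p - 1 := by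
    classical
    have := Fintype.ofFinite G
    have hp_dvd : p ∣ Fintype.card G := by
      rw [← Nat.card_eq_fintype_card, hG]
      exact dvd_mul_right p q
    rw [Set.ncard_eq_toFinset_card', Set.toFinset_ofPred,
      IsCyclic.card_orderOf_eq_totient hp_dvd, Nat.totient_prime hp]
  have hx_mem : x ∈ {y : G | orderOf y = p}ᶜ := fun h => hpq (h.symm.trans hx)
  rw [hset, Set.ncard_sdiff_singleton_of_mem hx_mem, Set.ncard_compl, horder_p, hG]
  have := hp.one_lt
  have : p ≤ p * q := Nat.le_mul_of_pos_right p hq.pos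
  omega

end PowerGraph

namespace DihedralGroup

variable {n : ℕ}

def rotationHom : Multiplicative (ZMod n) →* DihedralGroup n where
  toFun i := r i.toAdd
  map_one' := rfl
  map_mul' _ _ := (r_mul_r _ _).symm

theorem rotationHom_injective : Function.Injective (rotationHom (n := n)) :=
  fun _ _ h => r.inj h

theorem orderOf_r_eq_orderOf_ofAdd (i : ZMod n) : orderOf (r i) = orderOf (ofAdd i) :=
  orderOf_injective rotationHom rotationHom_injective (ofAdd i)

theorem sr_notMem_zpowers_r (i j : ZMod n) : sr j ∉ zpowers (r i) := by
  rintro ⟨k, hk⟩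
  simp [r_zpow] at hk

theorem sr_ne_one (i : ZMod n) : sr i ≠ 1 := by
  simp [one_def, -r_zero]

theorem r_eq_one_iff {i : ZMod n} : r i = 1 ↔ i = 0 := by
  simp [one_def, -r_zero]

theorem mem_zpowers_sr_iff {i : ZMod n} {x : DihedralGroup n} :
    x ∈ zpowers (sr i) ↔ x = 1 ∨ x = sr i := by
  classical
  have hfin : IsOfFinOrder (sr i) := orderOf_pos_iff.mp (by rw [orderOf_sr]; exact two_pos)
  rw [hfin.mem_zpowers_iff_mem_range_orderOf, orderOf_sr]
  simp [Nat.le_one_iff_eq_zero_or_eq_one, or_and_right, exists_or, eq_comm]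

theorem powerGraph_neighborSet_sr (i : ZMod n) :
    (powerGraph (DihedralGroup n)).neighborSet (sr i) = {1} := by
  ext x
  simp only [SimpleGraph.mem_neighborSet, powerGraph, mem_zpowers_sr_iff, Set.mem_singleton_iff]
  constructor
  · rintro ⟨hne, h | h⟩
    · cases x with
      | r j => exact absurd h (sr_notMem_zpowers_r j i)
      | sr j => exact absurd ((mem_zpowers_sr_iff.mp h).resolve_left (sr_ne_one i)) hne
    · exact h.resolve_right hne.symm
  · rintro rfl
    exact ⟨sr_ne_one i, Or.inr (Or.inl rfl)⟩

theorem powerGraph_neighborSet_r {i : ZMod n} (hi : i ≠ 0) :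
    (powerGraph (DihedralGroup n)).neighborSet (r i) =
      rotationHom '' (powerGraph (Multiplicative (ZMod n))).neighborSet (ofAdd i) := by
  ext x
  cases x with
  | r j =>
    show (powerGraph _).Adj (rotationHom (ofAdd i)) (rotationHom (ofAdd j)) ↔
      rotationHom (ofAdd j) ∈ _
    rw [powerGraph_adj_map_iff rotationHom_injective, rotationHom_injective.mem_set_image]
    rfl
  | sr j =>
    simp [powerGraph, mem_zpowers_sr_iff, sr_notMem_zpowers_r, rotationHom, r_eq_one_iff, hi]

theorem ncard_powerGraph_neighborSet_r {i : ZMod n} (hi : i ≠ 0) :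
    ((powerGraph (DihedralGroup n)).neighborSet (r i)).ncard =
      ((powerGraph (Multiplicative (ZMod n))).neighborSet (ofAdd i)).ncard := by
  rw [powerGraph_neighborSet_r hi, Set.ncard_image_of_injective _ rotationHom_injective]

end DihedralGroup

open DihedralGroup

/-- Degrees in the power graph of the dihedral group `D_{2pq}`. -/
theorem degrees_powerGraph_dihedral (p q : ℕ) (hp : p.Prime) (hq : q.Prime) (hpq : p ≠ q) :
    ((powerGraph (DihedralGroup (p * q))).neighborSet 1).ncard = 2 * p * q - 1 ∧
    (∀ i : ZMod (p * q), orderOf (DihedralGroup.r i) = p * q →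
      ((powerGraph (DihedralGroup (p * q))).neighborSet (DihedralGroup.r i)).ncard
        = p * q - 1) ∧
    (∀ i : ZMod (p * q), orderOf (DihedralGroup.r i) = q →
      ((powerGraph (DihedralGroup (p * q))).neighborSet (DihedralGroup.r i)).ncard
        = p * q - p) ∧
    (∀ i : ZMod (p * q), orderOf (DihedralGroup.r i) = p →
      ((powerGraph (DihedralGroup (p * q))).neighborSet (DihedralGroup.r i)).ncard
        = p * q - q) ∧
    (∀ i : ZMod (p * q),
      ((powerGraph (DihedralGroup (p * q))).neighborSet (DihedralGroup.sr i)).ncard = 1) := by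
  have : NeZero (p * q) := ⟨Nat.mul_ne_zero hp.ne_zero hq.ne_zero⟩
  have hcard : Nat.card (Multiplicative (ZMod (p * q))) = p * q := by simp
  have ne_zero_of_orderOf {i : ZMod (p * q)} {d : ℕ} (hi : orderOf (r i) = d) (hd : d ≠ 1) :
      i ≠ 0 := by
    rintro rfl
    exact hd (by rw [← hi, r_zero, orderOf_one])
  refine ⟨?_, fun i hi => ?_, fun i hi => ?_, fun i hi => ?_, fun i => ?_⟩
  · rw [powerGraph_neighborSet_one, Set.ncard_compl_singleton, nat_card, mul_assoc]
  · have hpq_ne_one : p * q ≠ 1 := fun h => hp.ne_one (Nat.eq_one_of_mul_eq_one_right h)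
    have hgen : zpowers (ofAdd i) = ⊤ := eq_top_of_card_eq _ <| by
      rw [Nat.card_zpowers, ← orderOf_r_eq_orderOf_ofAdd, hi, hcard]
    rw [ncard_powerGraph_neighborSet_r (ne_zero_of_orderOf hi hpq_ne_one),
      powerGraph_neighborSet_of_zpowers_eq_top hgen, Set.ncard_compl_singleton, hcard]
  · rw [ncard_powerGraph_neighborSet_r (ne_zero_of_orderOf hi hq.ne_one),
      ncard_powerGraph_neighborSet_of_orderOf_eq_prime hp hq hpq hcard
        (orderOf_r_eq_orderOf_ofAdd i ▸ hi)]
  · rw [ncard_powerGraph_neighborSet_r (ne_zero_of_orderOf hi hp.ne_one),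
      ncard_powerGraph_neighborSet_of_orderOf_eq_prime hq hp hpq.symm (hcard.trans (mul_comm p q))
        (orderOf_r_eq_orderOf_ofAdd i ▸ hi), mul_comm]
  · rw [powerGraph_neighborSet_sr, Set.ncard_singleton]
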